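/- arXiv:0706.0323 — 2 statements merged into one kernel-verified Lean document; each statement's English description precedes it below -/
import Mathlib

section
/- Let χ be a formal power series over ℂ with zero constant term and nonzero linear coefficient (one of the two √z-inverses of a moment series with vanishing mean), and let D be a formal power series over ℂ with nonzero constant term (encoding the S-transform S_y(z) of a variable with nonvanishing mean, via z = X²). Define χ₁(X) = χ(X)·D(X²) and χ̃₁(X) = χ(−X)·D(X²), the χ-series associated to the two product S-transforms S_x·S_y and S̃_x·S_y. Then χ̃₁(X) = χ₁(−X), there exist unique formal power series Ψ and Ψ̃ with zero constant term satisfying Ψ∘χ₁ = X² and Ψ̃∘χ̃₁ = X², and Ψ = Ψ̃. (Proposition 2.3(3): the two candidate S-transforms of the product yield the same moment series ψ_{xy}.) -/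
open PowerSeries

/-- Formal composition `F ∘ G` of power series over `ℂ`, intended for the case where
`G` has zero constant term (so that only finitely many terms contribute to each
coefficient). -/
noncomputable def comp (F G : PowerSeries ℂ) : PowerSeries ℂ :=
  PowerSeries.mk fun n =>
    PowerSeries.coeff n
      (∑ k ∈ Finset.range (n + 1), PowerSeries.C (PowerSeries.coeff k F) * G ^ k)

/-!
Since `D(X²)` is even, `χ̃₁(X) = χ(-X)·D(X²)` is `χ₁(-X)`. Composition `F ↦ F ∘ G` with a
series `G` of order exactly one is triangular: the `n`-th coefficient of `F ∘ G` is
`(coeff 1 G)ⁿ · coeff n F` plus terms involving only lower coefficients of `F`. Hence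
`F ∘ G = H` has exactly one solution `F`, found coefficient by coefficient. Substituting `-X`
commutes with composition and fixes `X²`, so `Ψ ∘ χ₁ = X²` gives `Ψ ∘ χ̃₁ = X²`, and uniqueness
for `χ̃₁` forces `Ψ = Ψ̃`.
-/

lemma coeff_comp (F G : ℂ⟦X⟧) (n : ℕ) :
    coeff n (comp F G) = ∑ k ∈ Finset.range (n + 1), coeff k F * coeff n (G ^ k) := by
  simp [comp, coeff_mk, map_sum, coeff_C_mul]

lemma constantCoeff_comp (F G : ℂ⟦X⟧) : constantCoeff (comp F G) = constantCoeff F := by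
  rw [← coeff_zero_eq_constantCoeff_apply, ← coeff_zero_eq_constantCoeff_apply, coeff_comp]
  simp

lemma comp_rescale (F G : ℂ⟦X⟧) (c : ℂ) :
    comp F (rescale c G) = rescale c (comp F G) := by
  ext n
  rw [coeff_comp, coeff_rescale, coeff_comp, Finset.mul_sum]
  refine Finset.sum_congr rfl fun k _ => ?_
  rw [← map_pow, coeff_rescale]
  ring

lemma rescale_neg_one_X_sq {A : Type*} [CommRing A] :
    rescale (-1 : A) (X ^ 2) = X ^ 2 := by
  rw [map_pow, rescale_neg_one_X, neg_sq]

lemma coeff_self_pow_of_constantCoeff_eq_zero {R : Type*} [CommSemiring R] {G : R⟦X⟧}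
    (h0 : constantCoeff G = 0) (n : ℕ) : coeff n (G ^ n) = coeff 1 G ^ n := by
  obtain ⟨H, rfl⟩ := X_dvd_iff.mpr h0
  have h1 : coeff 1 (X * H) = constantCoeff H := by simp
  simpa [h1, mul_pow] using coeff_X_pow_mul (H ^ n) n 0

section Triangular

variable {G : ℂ⟦X⟧}

lemma coeff_comp_eq_sum_add (h0 : constantCoeff G = 0) (F : ℂ⟦X⟧) (n : ℕ) :
    coeff n (comp F G)
      = ∑ k ∈ Finset.range n, coeff k F * coeff n (G ^ k) + coeff n F * coeff 1 G ^ n := by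
  rw [coeff_comp, Finset.sum_range_succ, coeff_self_pow_of_constantCoeff_eq_zero h0]

lemma comp_left_injective (h0 : constantCoeff G = 0) (h1 : coeff 1 G ≠ 0) :
    Function.Injective (comp · G) := by
  intro F F' h
  ext n
  induction n using Nat.strong_induction_on with
  | _ n ih =>
    have hn := congrArg (coeff n) h
    simp only [coeff_comp_eq_sum_add h0] at hn
    rw [Finset.sum_congr rfl fun k hk => by rw [ih k (Finset.mem_range.mp hk)]] at hn
    exact mul_right_cancel₀ (pow_ne_zero n h1) (add_left_cancel hn)

/-- The coefficients of the solution `F` of `F ∘ G = H`, solved for one at a time from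
`coeff_comp_eq_sum_add`. -/
noncomputable def compInvCoeff (G H : ℂ⟦X⟧) : ℕ → ℂ
  | n => (coeff n H - ∑ k : Fin n, compInvCoeff G H k * coeff n (G ^ (k : ℕ))) / coeff 1 G ^ n
  decreasing_by exact k.2

lemma comp_mk_compInvCoeff (h0 : constantCoeff G = 0) (h1 : coeff 1 G ≠ 0) (H : ℂ⟦X⟧) :
    comp (mk (compInvCoeff G H)) G = H := by
  ext n
  rw [coeff_comp_eq_sum_add h0, coeff_mk, compInvCoeff, div_mul_cancel₀ _ (pow_ne_zero n h1),
    Fin.sum_univ_eq_sum_range (fun k => compInvCoeff G H k * coeff n (G ^ k))]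
  simp only [coeff_mk]
  ring

lemma existsUnique_comp_eq (h0 : constantCoeff G = 0) (h1 : coeff 1 G ≠ 0) (H : ℂ⟦X⟧) :
    ∃! F, comp F G = H :=
  ⟨_, comp_mk_compInvCoeff h0 h1 H, fun _ hF =>
    comp_left_injective h0 h1 (hF.trans (comp_mk_compInvCoeff h0 h1 H).symm)⟩

lemma existsUnique_constantCoeff_eq_zero_and_comp_eq (h0 : constantCoeff G = 0)
    (h1 : coeff 1 G ≠ 0) {H : ℂ⟦X⟧} (hH : constantCoeff H = 0) :
    ∃! F, constantCoeff F = 0 ∧ comp F G = H := by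
  obtain ⟨F, hF, huniq⟩ := existsUnique_comp_eq h0 h1 H
  exact ⟨F, ⟨by rw [← constantCoeff_comp F G, hF, hH], hF⟩, fun F' hF' => huniq F' hF'.2⟩

end Triangular

/-- Proposition 2.3(3): let `χ` (zero constant term, nonzero linear coefficient) be one
of the two `√z`-inverses of a mean-zero moment series, and let `D` (nonzero constant
term) encode the S-transform `S_y` via `z = X²`. With `χ₁(X) = χ(X)·D(X²)` and
`χ̃₁(X) = χ(−X)·D(X²)` the χ-series of the two product S-transforms `S_x·S_y` and
`S̃_x·S_y`, one has `χ̃₁(X) = χ₁(−X)`, there are unique power series `Ψ`, `Ψ̃` with zero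
constant term with `Ψ ∘ χ₁ = X²` and `Ψ̃ ∘ χ̃₁ = X²`, and `Ψ = Ψ̃`: both candidate
S-transforms of the product give the same moment series `ψ_{xy}`. -/
theorem stmt_8 (χ D χ₁ χt₁ : PowerSeries ℂ)
    (hχ0 : PowerSeries.constantCoeff χ = 0)
    (hχ1 : PowerSeries.coeff 1 χ ≠ 0)
    (hD : PowerSeries.constantCoeff D ≠ 0)
    (hχ₁ : χ₁ = χ * comp D (PowerSeries.X ^ 2))
    (hχt₁ : χt₁ = PowerSeries.rescale (-1 : ℂ) χ * comp D (PowerSeries.X ^ 2)) :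
    χt₁ = PowerSeries.rescale (-1 : ℂ) χ₁ ∧
      (∃! Ψ : PowerSeries ℂ, PowerSeries.constantCoeff Ψ = 0 ∧
        comp Ψ χ₁ = PowerSeries.X ^ 2) ∧
      (∃! Ψt : PowerSeries ℂ, PowerSeries.constantCoeff Ψt = 0 ∧
        comp Ψt χt₁ = PowerSeries.X ^ 2) ∧
      ∀ Ψ Ψt : PowerSeries ℂ,
        PowerSeries.constantCoeff Ψ = 0 → comp Ψ χ₁ = PowerSeries.X ^ 2 →
        PowerSeries.constantCoeff Ψt = 0 → comp Ψt χt₁ = PowerSeries.X ^ 2 →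
        Ψ = Ψt := by
  have hres : χt₁ = rescale (-1 : ℂ) χ₁ := by
    rw [hχ₁, hχt₁, map_mul, ← comp_rescale, rescale_neg_one_X_sq]
  have h0 : constantCoeff χ₁ = 0 := by rw [hχ₁, map_mul, hχ0, zero_mul]
  have h1 : coeff 1 χ₁ ≠ 0 := by
    rw [hχ₁, coeff_one_mul, hχ0, mul_zero, add_zero, constantCoeff_comp]
    exact mul_ne_zero hχ1 hD
  have h0t : constantCoeff χt₁ = 0 := by
    rw [hres, ← coeff_zero_eq_constantCoeff_apply, coeff_rescale, coeff_zero_eq_constantCoeff_apply,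
      h0, mul_zero]
  have h1t : coeff 1 χt₁ ≠ 0 := by simpa [hres] using h1
  have hcompt : ∀ Ψ, comp Ψ χ₁ = X ^ 2 → comp Ψ χt₁ = X ^ 2 := fun Ψ hΨ => by
    rw [hres, comp_rescale, hΨ, rescale_neg_one_X_sq]
  refine ⟨hres, existsUnique_constantCoeff_eq_zero_and_comp_eq h0 h1 (by simp),
    existsUnique_constantCoeff_eq_zero_and_comp_eq h0t h1t (by simp),
    fun Ψ Ψt _ hΨ _ hΨt => ?_⟩
  exact comp_left_injective h0t h1t ((hcompt Ψ hΨ).trans hΨt.symm)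
end

section
/- Let ψ be a formal power series over ℂ with zero constant term satisfying ψ∘(X·((1+X²)²)⁻¹) = X² (so ψ is the moment series of the free multiplicative convolution of the standard semicircle with the free Poisson distribution, whose χ-series is χ(w) = w/(1+w²)², corresponding to the S-transform 1/(√z·(1+z))). Then M = 1 + ψ satisfies the algebraic equation X²·M⁴ − M + 1 = 0, equivalently ψ = X²·(1+ψ)⁴. (This is the formal power series form of the equation g⁴z² − zg + 1 = 0 for the Cauchy transform of μ ⊠ γ.) -/
/-!
Composition with `χ = X/(1+X²)²` is substitution into a series with zero constant term, hence a
ring homomorphism, and it is injective because `χ` has a compositional inverse (its linear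
coefficient is `1`). Both `ψ` and `X²(1+ψ)⁴` are sent to `X²`: the first by hypothesis, the
second because `χ²(1+X²)⁴ = X²`. Hence `ψ = X²(1+ψ)⁴`.
-/

open PowerSeries

theorem PowerSeries.subst_injective {R : Type*} [CommRing R] {G : R⟦X⟧}
    (hG : constantCoeff G = 0) (hG₁ : IsUnit (coeff 1 G)) :
    Function.Injective (subst G : R⟦X⟧ → R⟦X⟧) := by
  refine Function.LeftInverse.injective (g := subst (G.substInvOfIsUnit hG₁)) fun F => ?_
  rw [subst_comp_subst_apply (HasSubst.of_constantCoeff_zero' hG)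
      (HasSubst.substInvOfIsUnit G hG₁),
    subst_substInvOfIsUnit_right G hG hG₁, X_subst]

theorem comp_eq_subst (F : ℂ⟦X⟧) {G : ℂ⟦X⟧} (hG : constantCoeff G = 0) :
    comp F G = F.subst G := by
  ext n
  rw [comp, coeff_mk, coeff_subst' (HasSubst.of_constantCoeff_zero' hG), map_sum,
    finsum_eq_sum_of_support_subset _ (s := Finset.range (n + 1))]
  · simp only [coeff_C_mul, smul_eq_mul]
  · intro k hk
    rw [Finset.coe_range, Set.mem_Iio, Nat.lt_succ_iff]
    by_contra! hnk
    refine hk (smul_eq_zero_of_right _ (coeff_of_lt_order _ ?_))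
    exact (Nat.cast_lt.2 hnk).trans_le (le_order_pow_of_constantCoeff_eq_zero k hG)

theorem stmt_14_general (ψ : PowerSeries ℂ)
    (hχ : comp ψ (PowerSeries.X * ((1 + PowerSeries.X ^ 2) ^ 2)⁻¹)
      = PowerSeries.X ^ 2) :
    PowerSeries.X ^ 2 * (1 + ψ) ^ 4 - (1 + ψ) + 1 = 0 ∧
      ψ = PowerSeries.X ^ 2 * (1 + ψ) ^ 4 := by
  set χ : ℂ⟦X⟧ := X * ((1 + X ^ 2) ^ 2)⁻¹
  have hχ₀ : constantCoeff χ = 0 := by simp [χ]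
  have hχ₁ : coeff 1 χ = 1 := by simp [χ, coeff_succ_X_mul]
  have hsubst : HasSubst χ := HasSubst.of_constantCoeff_zero' hχ₀
  have hχ_sq : χ ^ 2 * (1 + X ^ 2) ^ 4 = X ^ 2 := by
    have hunit : (1 + X ^ 2 : ℂ⟦X⟧) ^ 2 * ((1 + X ^ 2) ^ 2)⁻¹ = 1 :=
      PowerSeries.mul_inv_cancel _ (by simp)
    linear_combination (X ^ 2 * ((1 + X ^ 2) ^ 2 * ((1 + X ^ 2) ^ 2)⁻¹ + 1)) * hunit
  rw [comp_eq_subst ψ hχ₀, ← coe_substAlgHom hsubst] at hχ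
  have hrhs : substAlgHom hsubst (X ^ 2 * (1 + ψ) ^ 4) = X ^ 2 := by
    simp only [map_mul, map_pow, map_add, map_one, hχ, coe_substAlgHom, subst_X hsubst, hχ_sq]
  have hψ : ψ = X ^ 2 * (1 + ψ) ^ 4 := by
    refine subst_injective hχ₀ (hχ₁ ▸ isUnit_one) ?_
    rw [← coe_substAlgHom hsubst, hχ, hrhs]
  exact ⟨by linear_combination -hψ, hψ⟩

/-- The moment series of the free multiplicative convolution of the standard
semicircle with the free Poisson distribution, whose χ-series is
`χ(w) = w/(1+w²)²` (S-transform `1/(√z(1+z))`), satisfies the algebraic equation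
`X²·M⁴ − M + 1 = 0` with `M = 1 + ψ`, equivalently `ψ = X²·(1+ψ)⁴` — the formal
power series form of `g⁴z² − zg + 1 = 0` for the Cauchy transform of `μ ⊠ γ`. -/
theorem stmt_14 (ψ : PowerSeries ℂ)
    (h0 : PowerSeries.constantCoeff ψ = 0)
    (hχ : comp ψ (PowerSeries.X * ((1 + PowerSeries.X ^ 2) ^ 2)⁻¹)
      = PowerSeries.X ^ 2) :
    PowerSeries.X ^ 2 * (1 + ψ) ^ 4 - (1 + ψ) + 1 = 0 ∧
      ψ = PowerSeries.X ^ 2 * (1 + ψ) ^ 4 :=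
  stmt_14_general ψ hχ
end
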